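/- Let P be a discrete Borel probability measure on ℝ and let η ∈ [0,∞) be such that whenever x, y ∈ ℝ satisfy 0 < |x − y| < η, at least one of P({x}), P({y}) vanishes. Then the finite equality η · β₁(P) = 2 · β₂(P) < ∞ holds if and only if P = λδ_x + (1−λ)δ_{x+η} for some λ ∈ [0,1] and some x ∈ ℝ. -/

import Mathlib

open MeasureTheory ProbabilityTheory Real Filter Set ENNReal
open scoped Classical

noncomputable def mu (P : Measure ℝ) : ℝ := ∫ x, x ∂P

/-- The absolute central moment `β_s(P) ∈ [0,∞]`, set to `∞` when the first absolute
moment of `P` is infinite. -/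

noncomputable def betaE (s : ℝ) (P : Measure ℝ) : ℝ≥0∞ :=
  if Integrable (fun x : ℝ => x) P then ∫⁻ x, ENNReal.ofReal (|x - mu P| ^ s) ∂P else ∞

/-- A measure on `ℝ` is discrete if it is a (countable) sum of point masses, i.e. the
measure of every (Borel) set is the sum of the masses of its points. -/
def IsDiscreteMeasure (P : Measure ℝ) : Prop :=
  ∀ A : Set ℝ, MeasurableSet A → P A = ∑' x : A, P {(x : ℝ)}

/-- Atoms of `P` are at mutual distance `≥ η`. -/
def Separated (P : Measure ℝ) (η : ℝ) : Prop :=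
  ∀ x y : ℝ, 0 < |x - y| → |x - y| < η → P {x} = 0 ∨ P {y} = 0

/-!
Write `μ` for the mean. The equality `η β₁ = 2 β₂` says that `2 (x - μ)² - η |x - μ|` has
integral zero, and so does `2 (x - μ)² - η |x - μ| + c (x - μ)` for every `c`. That function is
positive where `|x - μ| > η/2`, so some atom `a` lies within `η/2` of `μ`. Say `a = μ + d` with
`0 ≤ d ≤ η/2` (otherwise reflect). Separation places every other atom at distance at least `η`
from `a`, and for `c = η - 2d` the function is nonnegative at all these points and vanishes among
them only at `a` and `a - η`. A nonnegative function with zero integral vanishes almost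
everywhere, so `P` is carried by `{a - η, a}`.
-/

-- The expression equals `2u(u - d)` for `u ≥ 0` and `2u(u - d + η)` for `u ≤ 0`.
lemma two_mul_sq_sub_mul_abs_add_mul_nonneg {η d u : ℝ} (hd : 0 ≤ d) (hdη : 2 * d ≤ η)
    (hu : u = d ∨ η ≤ |u - d|) : 0 ≤ 2 * u ^ 2 - η * |u| + (η - 2 * d) * u := by
  rcases hu with rfl | hu
  · rw [abs_of_nonneg hd]; nlinarith
  rcases abs_cases u with ⟨hu', _⟩ | ⟨hu', _⟩ <;>
    rcases abs_cases (u - d) with ⟨hud, _⟩ | ⟨hud, _⟩ <;>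
    rw [hu'] <;> rw [hud] at hu <;> nlinarith

lemma eq_or_eq_sub_of_two_mul_sq_sub_mul_abs_add_mul_eq_zero {η d u : ℝ} (hd : 0 ≤ d)
    (hdη : 2 * d ≤ η) (hu : u = d ∨ η ≤ |u - d|)
    (h : 2 * u ^ 2 - η * |u| + (η - 2 * d) * u = 0) : u = d ∨ u = d - η := by
  rcases hu with rfl | hu
  · exact .inl rfl
  rcases abs_cases u with ⟨hu', _⟩ | ⟨hu', _⟩ <;> rw [hu'] at h
  · left
    rcases mul_eq_zero.mp (by linarith : u * (u - d) = 0) with rfl | h'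
    · rw [zero_sub, abs_neg, abs_of_nonneg hd] at hu
      linarith
    · linarith
  · right
    rcases mul_eq_zero.mp (by linarith : u * (u - (d - η)) = 0) with h' | h' <;> linarith

lemma IsDiscreteMeasure.ae_of_forall_atom {P : Measure ℝ} (hdisc : IsDiscreteMeasure P)
    {p : ℝ → Prop} (hp : MeasurableSet {x | p x}) (h : ∀ x, P {x} ≠ 0 → p x) :
    ∀ᵐ x ∂P, p x := by
  rw [ae_iff, ← compl_ofPred, hdisc _ hp.compl]
  exact ENNReal.tsum_eq_zero.mpr fun x => not_not.mp fun hx => x.2 (h x hx)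

lemma Separated.ae_eq_or_le_abs_sub {P : Measure ℝ} {η a : ℝ} (hsep : Separated P η)
    (hdisc : IsDiscreteMeasure P) (ha : P {a} ≠ 0) : ∀ᵐ x ∂P, x = a ∨ η ≤ |x - a| := by
  refine hdisc.ae_of_forall_atom ?_ fun x hx => ?_
  · exact (measurableSet_singleton a).union
      (measurableSet_le measurable_const (by fun_prop : Measurable fun x : ℝ => |x - a|))
  · by_contra! h
    exact (hsep x a (abs_pos.mpr (sub_ne_zero.mpr h.1)) h.2).elim hx ha

section CentralMoments

variable {P : Measure ℝ}

lemma integrable_of_betaE_ne_top {s : ℝ} (h : betaE s P ≠ ∞) : Integrable (fun x => x) P := by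
  by_contra hX
  exact h (if_neg hX)

lemma betaE_eq_ofReal_integral {s : ℝ} (hX : Integrable (fun x => x) P)
    (hs : Integrable (fun x => |x - mu P| ^ s) P) :
    betaE s P = ENNReal.ofReal (∫ x, |x - mu P| ^ s ∂P) := by
  rw [betaE, if_pos hX, ofReal_integral_eq_lintegral_ofReal hs (ae_of_all _ fun x => by positivity)]

lemma integrable_of_betaE_lt_top {s : ℝ} (h : betaE s P < ∞) :
    Integrable (fun x => |x - mu P| ^ s) P := by
  refine ⟨(by fun_prop : Measurable fun x : ℝ => |x - mu P| ^ s).aestronglyMeasurable, ?_⟩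
  rw [hasFiniteIntegral_iff_ofReal (ae_of_all _ fun x => by positivity)]
  rwa [betaE, if_pos (integrable_of_betaE_ne_top h.ne)] at h

lemma betaE_one_eq [IsFiniteMeasure P] (hX : Integrable (fun x => x) P) :
    betaE 1 P = ENNReal.ofReal (∫ x, |x - mu P| ∂P) := by
  have habs : Integrable (fun x => |x - mu P|) P := (hX.sub (integrable_const _)).abs
  simpa only [Real.rpow_one] using
    betaE_eq_ofReal_integral (s := 1) hX (by simpa only [Real.rpow_one] using habs)

lemma integrable_sq_of_betaE_two_lt_top (h : betaE 2 P < ∞) :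
    Integrable (fun x => (x - mu P) ^ 2) P := by
  simpa only [Real.rpow_two, sq_abs] using integrable_of_betaE_lt_top h

lemma betaE_two_eq (hX : Integrable (fun x => x) P)
    (hsq : Integrable (fun x => (x - mu P) ^ 2) P) :
    betaE 2 P = ENNReal.ofReal (∫ x, (x - mu P) ^ 2 ∂P) := by
  simpa only [Real.rpow_two, sq_abs] using
    betaE_eq_ofReal_integral (s := 2) hX (by simpa only [Real.rpow_two, sq_abs] using hsq)

end CentralMoments

section Equality

variable {P : Measure ℝ} [IsProbabilityMeasure P] {η : ℝ}

lemma integral_sub_mu (hX : Integrable (fun x => x) P) : ∫ x, (x - mu P) ∂P = 0 := by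
  rw [integral_sub hX (integrable_const _), integral_const, probReal_univ, one_smul, mu, sub_self]

lemma ae_eq_zero_of_moment_eq (hX : Integrable (fun x => x) P)
    (hsq : Integrable (fun x => (x - mu P) ^ 2) P)
    (heq : η * ∫ x, |x - mu P| ∂P = 2 * ∫ x, (x - mu P) ^ 2 ∂P) (c : ℝ)
    (hnonneg : ∀ᵐ x ∂P, 0 ≤ 2 * (x - mu P) ^ 2 - η * |x - mu P| + c * (x - mu P)) :
    ∀ᵐ x ∂P, 2 * (x - mu P) ^ 2 - η * |x - mu P| + c * (x - mu P) = 0 := by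
  have hlin : Integrable (fun x => x - mu P) P := hX.sub (integrable_const _)
  have hquad : Integrable (fun x => 2 * (x - mu P) ^ 2 - η * |x - mu P|) P :=
    (hsq.const_mul 2).sub (hlin.abs.const_mul η)
  have hint : ∫ x, (2 * (x - mu P) ^ 2 - η * |x - mu P| + c * (x - mu P)) ∂P = 0 := by
    rw [integral_add hquad (hlin.const_mul c),
      integral_sub (hsq.const_mul 2) (hlin.abs.const_mul η), integral_const_mul,
      integral_const_mul, integral_const_mul, integral_sub_mu hX, heq]
    ring
  exact (integral_eq_zero_iff_of_nonneg_ae hnonneg (hquad.add (hlin.const_mul c))).mp hint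

lemma exists_atom_near_mu (hdisc : IsDiscreteMeasure P) (hη : 0 ≤ η)
    (hX : Integrable (fun x => x) P) (hsq : Integrable (fun x => (x - mu P) ^ 2) P)
    (heq : η * ∫ x, |x - mu P| ∂P = 2 * ∫ x, (x - mu P) ^ 2 ∂P) :
    ∃ a, P {a} ≠ 0 ∧ 2 * |a - mu P| ≤ η := by
  by_contra! hfar
  have hfar_ae : ∀ᵐ x ∂P, η < 2 * |x - mu P| :=
    hdisc.ae_of_forall_atom (measurableSet_lt measurable_const (by fun_prop)) hfar
  have hpos : ∀ x, η < 2 * |x - mu P| →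
      0 < 2 * (x - mu P) ^ 2 - η * |x - mu P| + 0 * (x - mu P) := fun x hx => by
    nlinarith [sq_abs (x - mu P), mul_pos (by linarith : 0 < |x - mu P|) (sub_pos.mpr hx)]
  have hzero := ae_eq_zero_of_moment_eq hX hsq heq 0 (hfar_ae.mono fun x hx => (hpos x hx).le)
  have hfalse : ∀ᵐ x ∂P, False := (hfar_ae.and hzero).mono fun x hx => (hpos x hx.1).ne' hx.2
  exact IsProbabilityMeasure.ne_zero P (ae_eq_bot.mp (eventually_false_iff_eq_bot.mp hfalse))

lemma ae_eq_or_eq_sub_of_atom (hdisc : IsDiscreteMeasure P) (hsep : Separated P η)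
    (hX : Integrable (fun x => x) P) (hsq : Integrable (fun x => (x - mu P) ^ 2) P)
    (heq : η * ∫ x, |x - mu P| ∂P = 2 * ∫ x, (x - mu P) ^ 2 ∂P) {a ε : ℝ}
    (ha : P {a} ≠ 0) (hε : |ε| = 1) (hd : 0 ≤ ε * (a - mu P)) (hdη : 2 * (ε * (a - mu P)) ≤ η) :
    ∀ᵐ x ∂P, x = a ∨ x = a - ε * η := by
  -- in the coordinate `u = ε (x - μ)` the atom `a` sits at `u = d ∈ [0, η/2]`
  set d := ε * (a - mu P) with hd_def
  have hεε : ε * ε = 1 := by rw [← abs_mul_abs_self, hε, one_mul]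
  have hu : ∀ x, x = a ∨ η ≤ |x - a| →
      ε * (x - mu P) = d ∨ η ≤ |ε * (x - mu P) - d| := by
    rintro x (rfl | hx)
    · exact .inl rfl
    · rw [show ε * (x - mu P) - d = ε * (x - a) by ring, abs_mul, hε, one_mul]
      exact .inr hx
  have hφ : ∀ x,
      2 * (ε * (x - mu P)) ^ 2 - η * |ε * (x - mu P)| + (η - 2 * d) * (ε * (x - mu P)) =
        2 * (x - mu P) ^ 2 - η * |x - mu P| + (η - 2 * d) * ε * (x - mu P) := fun x => by
    rw [abs_mul, hε, one_mul]
    linear_combination 2 * (x - mu P) ^ 2 * hεε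
  have hsupp := hsep.ae_eq_or_le_abs_sub hdisc ha
  have hzero := ae_eq_zero_of_moment_eq hX hsq heq ((η - 2 * d) * ε) <| hsupp.mono fun x hx =>
    hφ x ▸ two_mul_sq_sub_mul_abs_add_mul_nonneg hd hdη (hu x hx)
  filter_upwards [hsupp, hzero] with x hx hx0
  rcases eq_or_eq_sub_of_two_mul_sq_sub_mul_abs_add_mul_eq_zero hd hdη (hu x hx)
    ((hφ x).trans hx0) with h | h
  · left; linear_combination ε * h + ε * hd_def - (x - a) * hεε
  · right; linear_combination ε * h + ε * hd_def - (x - a) * hεε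

lemma exists_ae_eq_or_eq_add_of_moment_eq
    (hdisc : IsDiscreteMeasure P) (hη : 0 ≤ η) (hsep : Separated P η)
    (hX : Integrable (fun x => x) P) (hsq : Integrable (fun x => (x - mu P) ^ 2) P)
    (heq : η * ∫ x, |x - mu P| ∂P = 2 * ∫ x, (x - mu P) ^ 2 ∂P) :
    ∃ b, ∀ᵐ x ∂P, x = b ∨ x = b + η := by
  obtain ⟨a, ha, haμ⟩ := exists_atom_near_mu hdisc hη hX hsq heq
  rcases le_total (mu P) a with hμa | haμ'
  · refine ⟨a - η,
      (ae_eq_or_eq_sub_of_atom hdisc hsep hX hsq heq ha (ε := 1) abs_one ?_ ?_).mono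
        fun x hx => ?_⟩
    · linarith
    · rw [abs_of_nonneg (sub_nonneg.mpr hμa)] at haμ; linarith
    · rw [sub_add_cancel, ← one_mul η]; exact hx.symm
  · refine ⟨a,
      (ae_eq_or_eq_sub_of_atom hdisc hsep hX hsq heq ha (ε := -1) (by simp) ?_ ?_).mono
        fun x hx => ?_⟩
    · linarith
    · rw [abs_of_nonpos (sub_nonpos.mpr haμ')] at haμ; linarith
    · rwa [neg_one_mul, sub_neg_eq_add] at hx

end Equality

lemma eq_smul_dirac_add_smul_dirac_of_ae {P : Measure ℝ} [IsProbabilityMeasure P] {b c : ℝ}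
    (h : ∀ᵐ x ∂P, x = b ∨ x = c) :
    ∃ l : ℝ, 0 ≤ l ∧ l ≤ 1 ∧
      P = ENNReal.ofReal l • Measure.dirac b + ENNReal.ofReal (1 - l) • Measure.dirac c := by
  have hP : P.restrict {b, c} = P := Measure.restrict_eq_self_of_ae_mem h
  have hbc_one : P {b, c} = 1 := by rw [← Measure.restrict_apply_univ, hP, measure_univ]
  by_cases hbc : b = c
  · subst hbc
    rw [pair_eq_singleton] at hP hbc_one
    refine ⟨1, zero_le_one, le_rfl, ?_⟩
    rw [sub_self, ofReal_zero, zero_smul, add_zero, ofReal_one, ← hP, Measure.restrict_singleton,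
      hbc_one]
  · have hdisj : Disjoint ({b} : Set ℝ) {c} := disjoint_singleton.mpr hbc
    rw [insert_eq, Measure.restrict_union hdisj (measurableSet_singleton c),
      Measure.restrict_singleton, Measure.restrict_singleton] at hP
    have hsum : P.real {b} + P.real {c} = 1 := by
      rw [← measureReal_union hdisj (measurableSet_singleton c), ← insert_eq, measureReal_def,
        hbc_one, toReal_one]
    refine ⟨P.real {b}, measureReal_nonneg, measureReal_le_one, ?_⟩
    rw [show 1 - P.real {b} = P.real {c} by linarith, ofReal_measureReal, ofReal_measureReal, hP]

section TwoPoint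

variable {l : ℝ}

lemma mu_smul_dirac_add_smul_dirac (hl0 : 0 ≤ l) (hl1 : l ≤ 1) (x y : ℝ) :
    mu (ENNReal.ofReal l • Measure.dirac x + ENNReal.ofReal (1 - l) • Measure.dirac y) =
      l * x + (1 - l) * y := by
  rw [mu, integral_add_measure ((integrable_dirac enorm_lt_top).smul_measure ofReal_ne_top)
      ((integrable_dirac enorm_lt_top).smul_measure ofReal_ne_top),
    integral_smul_measure, integral_smul_measure, integral_dirac, integral_dirac,
    toReal_ofReal hl0, toReal_ofReal (sub_nonneg.mpr hl1), smul_eq_mul, smul_eq_mul]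

lemma betaE_smul_dirac_add_smul_dirac (hl0 : 0 ≤ l) (hl1 : l ≤ 1) (s x y : ℝ) :
    betaE s (ENNReal.ofReal l • Measure.dirac x + ENNReal.ofReal (1 - l) • Measure.dirac y) =
      ENNReal.ofReal (l * ((1 - l) * |y - x|) ^ s + (1 - l) * (l * |y - x|) ^ s) := by
  have hl1' : 0 ≤ 1 - l := sub_nonneg.mpr hl1
  have hX : Integrable (fun z => z)
      (ENNReal.ofReal l • Measure.dirac x + ENNReal.ofReal (1 - l) • Measure.dirac y) :=
    ((integrable_dirac enorm_lt_top).smul_measure ofReal_ne_top).add_measure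
      ((integrable_dirac enorm_lt_top).smul_measure ofReal_ne_top)
  have hx : |x - (l * x + (1 - l) * y)| = (1 - l) * |y - x| := by
    rw [show x - (l * x + (1 - l) * y) = (1 - l) * (x - y) by ring, abs_mul, abs_of_nonneg hl1',
      abs_sub_comm]
  have hy : |y - (l * x + (1 - l) * y)| = l * |y - x| := by
    rw [show y - (l * x + (1 - l) * y) = l * (y - x) by ring, abs_mul, abs_of_nonneg hl0]
  rw [betaE, if_pos hX, mu_smul_dirac_add_smul_dirac hl0 hl1, lintegral_add_measure,
    lintegral_smul_measure, lintegral_smul_measure, lintegral_dirac, lintegral_dirac, hx, hy,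
    smul_eq_mul, smul_eq_mul, ← ofReal_mul hl0, ← ofReal_mul hl1',
    ← ofReal_add (by positivity) (by positivity)]

end TwoPoint

/-- equality discussion in the von Mises inequality for `s = 1`: the finite
equality `η·β₁ = 2·β₂ < ∞` holds iff `P = λδ_x + (1−λ)δ_{x+η}` for some `λ ∈ [0,1]`, `x ∈ ℝ`. -/
theorem von_mises_equality_s_one (P : Measure ℝ) (hP : IsProbabilityMeasure P)
    (hdisc : IsDiscreteMeasure P) (η : ℝ) (hη : 0 ≤ η) (hsep : Separated P η) :
    (ENNReal.ofReal η * betaE 1 P = 2 * betaE 2 P ∧ betaE 2 P < ∞) ↔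
      ∃ (l : ℝ) (x : ℝ), 0 ≤ l ∧ l ≤ 1 ∧
        P = ENNReal.ofReal l • Measure.dirac x
            + ENNReal.ofReal (1 - l) • Measure.dirac (x + η) := by
  constructor
  · rintro ⟨heq, hfin⟩
    have hX := integrable_of_betaE_ne_top hfin.ne
    have hsq := integrable_sq_of_betaE_two_lt_top hfin
    rw [betaE_one_eq hX, betaE_two_eq hX hsq, ← ofReal_mul hη, ← ofReal_ofNat 2,
      ← ofReal_mul zero_le_two, ofReal_eq_ofReal_iff (by positivity) (by positivity)] at heq
    obtain ⟨b, hb⟩ := exists_ae_eq_or_eq_add_of_moment_eq hdisc hη hsep hX hsq heq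
    obtain ⟨l, hl⟩ := eq_smul_dirac_add_smul_dirac_of_ae hb
    exact ⟨l, b, hl⟩
  · rintro ⟨l, x, hl0, hl1, rfl⟩
    simp only [betaE_smul_dirac_add_smul_dirac hl0 hl1, add_sub_cancel_left, abs_of_nonneg hη,
      Real.rpow_one, Real.rpow_two]
    refine ⟨?_, ofReal_lt_top⟩
    rw [← ofReal_mul hη, ← ofReal_ofNat 2, ← ofReal_mul zero_le_two]
    congr 1
    ring
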